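/- Let S(x₁,x₂,x₃) be the 4×4 symmetric matrix [[0,x₁,x₂,x₃],[x₁,0,λ₃x₃,λ₂x₂],[x₂,λ₃x₃,0,λ₁x₁],[x₃,λ₂x₂,λ₁x₁,0]] depending on fixed real parameters λ₁,λ₂,λ₃. Then trace(S³) = 6·x₁x₂x₃·(λ₁λ₂λ₃ + λ₁ + λ₂ + λ₃). Consequently the eigenvalues of S(x₁,x₂,x₃) are symmetrically arranged around zero for all (x₁,x₂,x₃) ∈ ℝ³ if and only if λ₁λ₂λ₃ + λ₁ + λ₂ + λ₃ = 0. -/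

import Mathlib

/-!
For a real symmetric matrix the roots of the characteristic polynomial are its real eigenvalues
`μ₁, …, μ₄`, and `tr S = ∑ μᵢ`, `tr S³ = ∑ μᵢ³`. A multiset of four numbers with sum zero is
invariant under negation iff its power sum `p₃` vanishes: one direction is clear, and for the
other Newton's identities give `e₁ = e₃ = 0`, so `∏ (X - μᵢ) = ∏ (X + μᵢ)`. Since `tr S = 0` and
`tr S³ = 6 x₁x₂x₃ (λ₁λ₂λ₃ + λ₁ + λ₂ + λ₃)` by direct computation, the symmetry criterion follows.
-/

open Matrix Polynomial Unitary

/-- The general element of Bryant's Type C austere subspace. -/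
def SC (l1 l2 l3 x1 x2 x3 : ℝ) : Matrix (Fin 4) (Fin 4) ℝ :=
  !![0,  x1,      x2,      x3;
     x1, 0,       l3 * x3, l2 * x2;
     x2, l3 * x3, 0,       l1 * x1;
     x3, l2 * x2, l1 * x1, 0]

theorem Matrix.IsHermitian.trace_pow_eq_sum_eigenvalues_pow {𝕜 n : Type*} [RCLike 𝕜] [Fintype n]
    [DecidableEq n] {A : Matrix n n 𝕜} (hA : A.IsHermitian) (k : ℕ) :
    (A ^ k).trace = ∑ i, (hA.eigenvalues i : 𝕜) ^ k := by
  conv_lhs => rw [hA.spectral_theorem]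
  rw [← map_pow, conjStarAlgAut_apply, trace_mul_cycle,
    Unitary.coe_star_mul_self, one_mul, diagonal_pow, trace_diagonal]
  simp

theorem Multiset.map_neg_eq_self_iff_sum_map_pow_three_eq_zero {K : Type*} [Field K] [CharZero K]
    {s : Multiset K} (hcard : card s = 4) (hsum : s.sum = 0) :
    s.map Neg.neg = s ↔ (s.map (· ^ 3)).sum = 0 := by
  refine ⟨fun hneg => ?_, fun hcube => ?_⟩
  · have : (s.map (· ^ 3)).sum = -(s.map (· ^ 3)).sum := by
      conv_lhs => rw [← hneg]
      simp only [map_map, Function.comp_def, Odd.neg_pow (by decide : Odd 3), sum_map_neg]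
    exact self_eq_neg.1 this
  · obtain ⟨a, b, c, d, rfl⟩ := card_eq_four.1 hcard
    simp only [insert_eq_cons, sum_cons, sum_singleton, map_cons, map_singleton] at hsum hcube
    -- Newton's identity 6 e₃ = p₁³ - 3 p₁ p₂ + 2 p₃; the polynomials with roots `s` and `-s`
    -- differ by `2 (e₁ X³ + e₃ X)`.
    have he3 : a * b * c + a * b * d + a * c * d + b * c * d = 0 := by
      linear_combination ((a + b + c + d) ^ 2 - 3 * (a ^ 2 + b ^ 2 + c ^ 2 + d ^ 2)) / 6 * hsum
        + hcube / 3
    have hsumC := congrArg C hsum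
    have he3C := congrArg C he3
    simp only [_root_.map_add, _root_.map_mul, _root_.map_zero] at hsumC he3C
    calc _ = ((({a, b, c, d} : Multiset K).map Neg.neg).map (fun x => X - C x)).prod.roots :=
          (roots_multiset_prod_X_sub_C _).symm
      _ = (({a, b, c, d} : Multiset K).map (fun x => X - C x)).prod.roots := by
          congr 1
          simp only [insert_eq_cons, map_cons, map_singleton, prod_cons, prod_singleton, map_neg]
          linear_combination (2 * X ^ 3) * hsumC + (2 * X) * he3C
      _ = _ := roots_multiset_prod_X_sub_C _

theorem Matrix.IsHermitian.map_neg_roots_charpoly_eq_iff {𝕜 n : Type*} [RCLike 𝕜] [Fintype n]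
    [DecidableEq n] {A : Matrix n n 𝕜} (hA : A.IsHermitian) (hn : Fintype.card n = 4)
    (htrace : A.trace = 0) :
    A.charpoly.roots.map (fun t => -t) = A.charpoly.roots ↔ (A ^ 3).trace = 0 := by
  refine Multiset.map_neg_eq_self_iff_sum_map_pow_three_eq_zero ?_ ?_ |>.trans ?_
  · simp [hA.roots_charpoly_eq_eigenvalues, hn]
  · rwa [← trace_eq_sum_roots_charpoly_of_splits hA.splits_charpoly]
  · simp [hA.roots_charpoly_eq_eigenvalues, hA.trace_pow_eq_sum_eigenvalues_pow]

theorem isHermitian_SC (l1 l2 l3 x1 x2 x3 : ℝ) : (SC l1 l2 l3 x1 x2 x3).IsHermitian := by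
  ext i j
  fin_cases i <;> fin_cases j <;> simp [SC]

theorem trace_SC (l1 l2 l3 x1 x2 x3 : ℝ) : (SC l1 l2 l3 x1 x2 x3).trace = 0 := by
  simp [SC, trace, Fin.sum_univ_four]

theorem trace_SC_pow_three (l1 l2 l3 x1 x2 x3 : ℝ) :
    ((SC l1 l2 l3 x1 x2 x3) ^ 3).trace
      = 6 * (x1 * x2 * x3) * (l1 * l2 * l3 + l1 + l2 + l3) := by
  simp [SC, pow_succ, trace, Fin.sum_univ_four]
  ring

/-- trace(S³) = 6·x₁x₂x₃·(λ₁λ₂λ₃+λ₁+λ₂+λ₃), and the eigenvalues of S are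
symmetric about zero for all x iff λ₁λ₂λ₃+λ₁+λ₂+λ₃ = 0. -/
theorem stmt7 (l1 l2 l3 : ℝ) :
    (∀ x1 x2 x3 : ℝ, ((SC l1 l2 l3 x1 x2 x3) ^ 3).trace
        = 6 * (x1 * x2 * x3) * (l1 * l2 * l3 + l1 + l2 + l3)) ∧
    ((∀ x1 x2 x3 : ℝ,
        (SC l1 l2 l3 x1 x2 x3).charpoly.roots.map (fun t => -t)
          = (SC l1 l2 l3 x1 x2 x3).charpoly.roots)
      ↔ l1 * l2 * l3 + l1 + l2 + l3 = 0) := by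
  have hsymm x1 x2 x3 := (isHermitian_SC l1 l2 l3 x1 x2 x3).map_neg_roots_charpoly_eq_iff
    (Fintype.card_fin 4) (trace_SC l1 l2 l3 x1 x2 x3)
  refine ⟨trace_SC_pow_three l1 l2 l3, fun h => ?_, fun hK x1 x2 x3 => ?_⟩
  · have := (hsymm 1 1 1).1 (h 1 1 1)
    rw [trace_SC_pow_three] at this
    linarith
  · rw [hsymm, trace_SC_pow_three, hK, mul_zero]
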